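/- Every 3×3 complex matrix A is unitarily tridiagonalisable: there exists a unitary U ∈ U(3) such that U A U* is tridiagonal. -/

import Mathlib

open Matrix

/-- A matrix is tridiagonal if all entries with |i-j| ≥ 2 vanish. -/
def IsTridiagonal {n : ℕ} (B : Matrix (Fin n) (Fin n) ℂ) : Prop :=
  ∀ i j : Fin n, 2 ≤ |(i : ℤ) - (j : ℤ)| → B i j = 0

/-!
Pick a unit eigenvector `v` of `A`, say `A v = μ v`, and a unit vector `w` orthogonal to both `v`
and `Aᴴ v`, which exists because the dimension is `3 > 2`. In any orthonormal basis `(v, _, w)`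
the corner entries of `A` are `⟪v, A w⟫ = ⟪Aᴴ v, w⟫ = 0` and `⟪w, A v⟫ = μ ⟪w, v⟫ = 0`, so the
unitary change of basis makes `A` tridiagonal.
-/

theorem exists_norm_eq_one_inner_eq_zero_of_two_lt_finrank {𝕜 E : Type*} [RCLike 𝕜]
    [NormedAddCommGroup E] [InnerProductSpace 𝕜 E] [FiniteDimensional 𝕜 E]
    (h : 2 < Module.finrank 𝕜 E) (u v : E) :
    ∃ w : E, ‖w‖ = 1 ∧ inner 𝕜 u w = 0 ∧ inner 𝕜 v w = 0 := by
  set K := Submodule.span 𝕜 (Set.range ![u, v])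
  have hKperp : Kᗮ ≠ ⊥ := by
    intro hbot
    have hK : Module.finrank 𝕜 K ≤ 2 := finrank_range_le_card (R := 𝕜) ![u, v]
    have := K.finrank_add_finrank_orthogonal
    rw [hbot, finrank_bot] at this
    omega
  obtain ⟨z, hzK, hz⟩ := Submodule.exists_mem_ne_zero_of_ne_bot hKperp
  have horth : ∀ x ∈ K, inner 𝕜 x ((‖z‖⁻¹ : 𝕜) • z) = 0 := fun x hx =>
    K.inner_right_of_mem_orthogonal hx (Kᗮ.smul_mem _ hzK)
  exact ⟨_, norm_smul_inv_norm hz, horth u (Submodule.subset_span ⟨0, rfl⟩),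
    horth v (Submodule.subset_span ⟨1, rfl⟩)⟩

theorem orthonormal_domRestrict_pair {𝕜 E ι : Type*} [RCLike 𝕜] [NormedAddCommGroup E]
    [InnerProductSpace 𝕜 E] [DecidableEq ι] {i j : ι} (hij : i ≠ j) {v w : E} (hv : ‖v‖ = 1)
    (hw : ‖w‖ = 1) (hvw : inner 𝕜 v w = 0) :
    Orthonormal 𝕜 (({i, j} : Set ι).domRestrict fun k => if k = i then v else w) := by
  rw [orthonormal_iff_ite]
  rintro ⟨k, rfl | rfl⟩ ⟨l, rfl | rfl⟩ <;>
    simp [Set.domRestrict, Subtype.ext_iff, hij, hij.symm, hv, hw, hvw, inner_eq_zero_symm.mp hvw,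
      inner_self_eq_norm_sq_to_K]

theorem LinearMap.exists_orthonormalBasis_inner_apply_eq_zero {E ι : Type*} [NormedAddCommGroup E]
    [InnerProductSpace ℂ E] [FiniteDimensional ℂ E] [Fintype ι] (T : E →ₗ[ℂ] E)
    (hι : Module.finrank ℂ E = Fintype.card ι) (h : 2 < Module.finrank ℂ E) {i j : ι}
    (hij : i ≠ j) :
    ∃ b : OrthonormalBasis ι ℂ E, inner ℂ (b i) (T (b j)) = 0 ∧ inner ℂ (b j) (T (b i)) = 0 := by
  classical
  have : Nontrivial E := Module.nontrivial_of_finrank_pos (R := ℂ) (by omega)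
  obtain ⟨μ, hμ⟩ := Module.End.exists_eigenvalue T
  obtain ⟨x, hx⟩ := hμ.exists_hasEigenvector
  set v := (‖x‖⁻¹ : ℂ) • x
  have hTv : T v = μ • v := by rw [map_smul, hx.apply_eq_smul, smul_comm]
  obtain ⟨w, hw, hvw, hadj⟩ :=
    exists_norm_eq_one_inner_eq_zero_of_two_lt_finrank h v (T.adjoint v)
  obtain ⟨b, hb⟩ := (orthonormal_domRestrict_pair hij (norm_smul_inv_norm hx.2) hw hvw
    ).exists_orthonormalBasis_extension_of_card_eq hι
  have hbi : b i = v := by simpa using hb i (by simp)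
  have hbj : b j = w := by simpa [hij.symm] using hb j (by simp)
  refine ⟨b, ?_, ?_⟩
  · rwa [hbi, hbj, ← T.adjoint_inner_left]
  · rw [hbi, hbj, hTv, inner_smul_right, inner_eq_zero_symm.mp hvw, mul_zero]

theorem conjTranspose_toMatrix_mul_mul_toMatrix_apply {𝕜 n : Type*} [RCLike 𝕜] [Fintype n]
    [DecidableEq n] (b : OrthonormalBasis n 𝕜 (EuclideanSpace 𝕜 n)) (A : Matrix n n 𝕜) (i j : n) :
    (((EuclideanSpace.basisFun n 𝕜).toBasis.toMatrix b)ᴴ * A *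
      (EuclideanSpace.basisFun n 𝕜).toBasis.toMatrix b) i j =
      inner 𝕜 (b i) (toEuclideanLin A (b j)) := by
  simp only [mul_apply, conjTranspose_apply, Module.Basis.toMatrix_apply,
    OrthonormalBasis.coe_toBasis_repr_apply, EuclideanSpace.basisFun_repr, toLpLin_apply,
    EuclideanSpace.inner_eq_star_dotProduct, dotProduct, mulVec, Pi.star_apply, Finset.sum_mul]
  rw [Finset.sum_comm]
  exact Finset.sum_congr rfl fun _ _ => Finset.sum_congr rfl fun _ _ => by ring

theorem isTridiagonal_fin_three {B : Matrix (Fin 3) (Fin 3) ℂ} (h02 : B 0 2 = 0)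
    (h20 : B 2 0 = 0) : IsTridiagonal B := by
  intro i j hij
  fin_cases i <;> fin_cases j <;> first | assumption | norm_num at hij

theorem tridiagonalisable_three (A : Matrix (Fin 3) (Fin 3) ℂ) :
    ∃ U ∈ Matrix.unitaryGroup (Fin 3) ℂ, IsTridiagonal (U * A * Uᴴ) := by
  obtain ⟨b, h02, h20⟩ := (toEuclideanLin A).exists_orthonormalBasis_inner_apply_eq_zero
    (by simp) (by simp) (by decide : (0 : Fin 3) ≠ 2)
  set P := (EuclideanSpace.basisFun (Fin 3) ℂ).toBasis.toMatrix b
  refine ⟨Pᴴ, Unitary.star_mem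
    ((EuclideanSpace.basisFun _ _).toMatrix_orthonormalBasis_mem_unitary b), ?_⟩
  rw [conjTranspose_conjTranspose]
  exact isTridiagonal_fin_three
    ((conjTranspose_toMatrix_mul_mul_toMatrix_apply b A 0 2).trans h02)
    ((conjTranspose_toMatrix_mul_mul_toMatrix_apply b A 2 0).trans h20)
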